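/- arXiv:gr-qc/0504081 — 2 statements merged into one kernel-verified Lean document; each statement's English description precedes it below -/
import Mathlib

section
/- Let K ⊆ ℝ³ be compact with nonempty frontier, let Ω = ℝ³ ∖ K, and assume Ω is connected. Suppose G is continuous on the closure of Ω, harmonic on Ω, equal to 0 at every point of the frontier of Ω, and G(x) → 1 as ‖x‖ → ∞. Then 0 < G(x) < 1 for every x ∈ Ω. -/
open Filter

/-- Euclidean 3-space. -/
noncomputable abbrev E3 := EuclideanSpace ℝ (Fin 3)

/-- The Laplacian of `u : E3 → ℝ` at `x`: the trace of the Hessian, computed as the sum of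
the pure second derivatives in the standard coordinate directions. -/
noncomputable def laplacian (u : E3 → ℝ) (x : E3) : ℝ :=
  ∑ i : Fin 3, iteratedFDeriv ℝ 2 u x ![EuclideanSpace.single i 1, EuclideanSpace.single i 1]

/-- `u` is harmonic on `Ω`: it is `C²` on `Ω` and its Laplacian vanishes on `Ω`. -/
def HarmonicOn (u : E3 → ℝ) (Ω : Set E3) : Prop :=
  ContDiffOn ℝ 2 u Ω ∧ ∀ x ∈ Ω, laplacian u x = 0

/-!
The weak bounds `0 ≤ G ≤ 1` come from the maximum principle on the bounded open sets
`Ω ∩ B(0, R)`: adding `β ‖x‖²` makes a harmonic function strictly subharmonic, so it cannot have an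
interior maximum, and on the boundary `G` is controlled by `G = 0` on `∂Ω` and `G → 1` at infinity.
Strictness comes from the strong minimum principle for the nonnegative harmonic functions `G` and
`1 - G`, each positive somewhere on the connected set `Ω` (far out, resp. near `∂Ω`): by Hopf's
lemma, with the barrier `exp (-α ‖x - c‖²)` on an annulus, a nonnegative superharmonic function
cannot vanish at an interior point of a ball on which it is positive, so its zero set is open.
-/

open Set Metric Topology Bornology Module InnerProductSpace
open scoped Laplacian RealInnerProductSpace

section LineRestriction

variable {E : Type*} [NormedAddCommGroup E] [NormedSpace ℝ E] {f : E → ℝ} {x e : E}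

theorem DifferentiableAt.hasDerivAt_comp_add_smul {t : ℝ} (hf : DifferentiableAt ℝ f (x + t • e)) :
    HasDerivAt (fun s : ℝ => f (x + s • e)) (fderiv ℝ f (x + t • e) e) t := by
  have hline : HasDerivAt (fun s : ℝ => x + s • e) e t := by
    simpa using ((hasDerivAt_id t).smul_const e).const_add x
  exact hf.hasFDerivAt.comp_hasDerivAt t hline

theorem ContDiffAt.eventually_hasDerivAt_comp_add_smul (hf : ContDiffAt ℝ 2 f x) :
    ∀ᶠ t in 𝓝 (0 : ℝ), HasDerivAt (fun s : ℝ => f (x + s • e)) (fderiv ℝ f (x + t • e) e) t := by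
  have hline : Continuous fun t : ℝ => x + t • e := by fun_prop
  have hdiff : ∀ᶠ y in 𝓝 x, DifferentiableAt ℝ f y :=
    (hf.eventually (by simp)).mono fun y hy => hy.differentiableAt two_ne_zero
  exact ((hline.tendsto' 0 x (by simp)).eventually hdiff).mono fun t ht =>
    ht.hasDerivAt_comp_add_smul

theorem ContDiffAt.hasDerivAt_fderiv_comp_add_smul (hf : ContDiffAt ℝ 2 f x) :
    HasDerivAt (fun t : ℝ => fderiv ℝ f (x + t • e) e) (iteratedFDeriv ℝ 2 f x ![e, e]) 0 := by
  have hd : DifferentiableAt ℝ (fderiv ℝ f) x :=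
    (hf.fderiv_right (m := 1) (by norm_num)).differentiableAt one_ne_zero
  have hline : HasDerivAt (fun s : ℝ => x + s • e) e 0 := by
    simpa using ((hasDerivAt_id (0 : ℝ)).smul_const e).const_add x
  have hcomp := ((ContinuousLinearMap.apply ℝ ℝ e).hasFDerivAt.comp x
    hd.hasFDerivAt).comp_hasDerivAt_of_eq (0 : ℝ) hline (by simp)
  rw [iteratedFDeriv_two_apply]
  simpa [Function.comp_def] using hcomp

theorem ContDiffAt.iteratedFDeriv_two_apply_eq_of_hasDerivAt (hf : ContDiffAt ℝ 2 f x)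
    {g' : ℝ → ℝ} {c : ℝ} (hg : ∀ᶠ t in 𝓝 (0 : ℝ), HasDerivAt (fun s : ℝ => f (x + s • e)) (g' t) t)
    (hg' : HasDerivAt g' c 0) : iteratedFDeriv ℝ 2 f x ![e, e] = c := by
  have heq : (fun t : ℝ => fderiv ℝ f (x + t • e) e) =ᶠ[𝓝 0] g' := by
    filter_upwards [hf.eventually_hasDerivAt_comp_add_smul (e := e), hg] with t h₁ h₂
    exact h₁.unique h₂
  exact (hf.hasDerivAt_fderiv_comp_add_smul.congr_of_eventuallyEq heq.symm).unique hg'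

theorem IsLocalMax.le_zero_of_hasDerivAt_of_hasDerivAt {g g' : ℝ → ℝ} {a c : ℝ}
    (hmax : IsLocalMax g a) (hg : ∀ᶠ t in 𝓝 a, HasDerivAt g (g' t) t) (hg' : HasDerivAt g' c a) :
    c ≤ 0 := by
  by_contra! hc
  have hderiv : deriv g =ᶠ[𝓝 a] g' := hg.mono fun t ht => ht.deriv
  -- the second derivative test makes `a` a local minimum as well, so `g` is locally constant
  have hmin : IsLocalMin g a := isLocalMin_of_deriv_deriv_pos
    (by rwa [hderiv.deriv_eq, hg'.deriv]) hmax.deriv_eq_zero hg.self_of_nhds.continuousAt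
  have hconst : g =ᶠ[𝓝 a] fun _ => g a := (hmin.and hmax).mono fun t ht => le_antisymm ht.2 ht.1
  have hzero : g' =ᶠ[𝓝 a] fun _ => 0 := by
    filter_upwards [hconst.eventuallyEq_nhds, hg] with t ht hgt
    exact hgt.unique ((hasDerivAt_const t (g a)).congr_of_eventuallyEq ht)
  exact hc.ne' ((hasDerivAt_const a (0 : ℝ)).congr_of_eventuallyEq hzero |>.unique hg').symm

theorem IsLocalMax.iteratedFDeriv_two_apply_self_nonpos (hmax : IsLocalMax f x)
    (hf : ContDiffAt ℝ 2 f x) (e : E) : iteratedFDeriv ℝ 2 f x ![e, e] ≤ 0 := by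
  have hmax' : IsLocalMax f (x + (0 : ℝ) • e) := by simpa using hmax
  have hline : IsLocalMax (fun s : ℝ => f (x + s • e)) 0 :=
    hmax'.comp_continuous (g := fun s : ℝ => x + s • e) (by fun_prop)
  exact hline.le_zero_of_hasDerivAt_of_hasDerivAt hf.eventually_hasDerivAt_comp_add_smul
    hf.hasDerivAt_fderiv_comp_add_smul

end LineRestriction

section Laplacian

variable {E : Type*} [NormedAddCommGroup E] [InnerProductSpace ℝ E] {x : E}

theorem iteratedFDeriv_two_apply_self_comp_norm_sub_sq {φ φ' : ℝ → ℝ} {φ'' : ℝ} {c : E}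
    (hφ : ContDiffAt ℝ 2 φ (‖x - c‖ ^ 2)) (hφ' : ∀ᶠ s in 𝓝 (‖x - c‖ ^ 2), HasDerivAt φ (φ' s) s)
    (hφ'' : HasDerivAt φ' φ'' (‖x - c‖ ^ 2)) (e : E) :
    iteratedFDeriv ℝ 2 (fun y => φ (‖y - c‖ ^ 2)) x ![e, e] =
      4 * ⟪x - c, e⟫ ^ 2 * φ'' + 2 * ‖e‖ ^ 2 * φ' (‖x - c‖ ^ 2) := by
  have hpt : ∀ t : ℝ, HasDerivAt (fun s : ℝ => x + s • e - c) e t := fun t => by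
    simpa using (((hasDerivAt_id t).smul_const e).const_add x).sub_const c
  have hq : ∀ t : ℝ, HasDerivAt (fun s : ℝ => ‖x + s • e - c‖ ^ 2) (2 * ⟪x + t • e - c, e⟫) t :=
    fun t => (hpt t).norm_sq
  have hqcont : Continuous fun s : ℝ => ‖x + s • e - c‖ ^ 2 := by fun_prop
  have hf : ContDiffAt ℝ 2 (fun y => φ (‖y - c‖ ^ 2)) x :=
    hφ.comp x ((contDiff_id.sub contDiff_const).norm_sq ℝ).contDiffAt
  refine hf.iteratedFDeriv_two_apply_eq_of_hasDerivAt
    (g' := fun t => φ' (‖x + t • e - c‖ ^ 2) * (2 * ⟪x + t • e - c, e⟫)) ?_ ?_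
  · filter_upwards [(hqcont.tendsto' 0 _ (by simp)).eventually hφ'] with t ht
    exact ht.comp t (hq t)
  · have hφ''0 : HasDerivAt φ' φ'' (‖x + (0 : ℝ) • e - c‖ ^ 2) := by simpa using hφ''
    have hinner : HasDerivAt (fun t : ℝ => 2 * ⟪x + t • e - c, e⟫) (2 * ⟪e, e⟫) 0 := by
      simpa using ((hpt 0).inner ℝ (hasDerivAt_const 0 e)).const_mul 2
    refine ((hφ''0.comp 0 (hq 0)).mul hinner).congr_deriv ?_
    simp only [Function.comp_apply, zero_smul, add_zero, real_inner_self_eq_norm_sq]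
    ring

variable [FiniteDimensional ℝ E]

theorem IsLocalMax.laplacian_nonpos {f : E → ℝ} (hmax : IsLocalMax f x) (hf : ContDiffAt ℝ 2 f x) :
    Δ f x ≤ 0 := by
  rw [laplacian_eq_iteratedFDeriv_stdOrthonormalBasis]
  exact Finset.sum_nonpos fun i _ => hmax.iteratedFDeriv_two_apply_self_nonpos hf _

theorem laplacian_comp_norm_sub_sq {φ φ' : ℝ → ℝ} {φ'' : ℝ} {c : E}
    (hφ : ContDiffAt ℝ 2 φ (‖x - c‖ ^ 2)) (hφ' : ∀ᶠ s in 𝓝 (‖x - c‖ ^ 2), HasDerivAt φ (φ' s) s)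
    (hφ'' : HasDerivAt φ' φ'' (‖x - c‖ ^ 2)) :
    Δ (fun y => φ (‖y - c‖ ^ 2)) x =
      4 * ‖x - c‖ ^ 2 * φ'' + 2 * finrank ℝ E * φ' (‖x - c‖ ^ 2) := by
  set b := stdOrthonormalBasis ℝ E
  have hsum : ∑ i, ⟪x - c, b i⟫ ^ 2 = ‖x - c‖ ^ 2 := by
    simpa [sq, real_inner_comm, real_inner_self_eq_norm_sq] using
      b.sum_inner_mul_inner (x - c) (x - c)
  simp only [laplacian_eq_iteratedFDeriv_orthonormalBasis _ b,
    iteratedFDeriv_two_apply_self_comp_norm_sub_sq hφ hφ' hφ'', b.orthonormal.1,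
    Finset.sum_add_distrib, ← Finset.mul_sum, ← Finset.sum_mul, hsum]
  simp only [one_pow, mul_one, Finset.sum_const, Finset.card_univ, Fintype.card_fin, nsmul_eq_mul]
  ring

theorem laplacian_const_mul_norm_sq (β : ℝ) (x : E) :
    Δ (fun y : E => β * ‖y‖ ^ 2) x = 2 * finrank ℝ E * β := by
  have h := laplacian_comp_norm_sub_sq (x := x) (c := 0) (φ := fun s => β * s) (φ' := fun _ => β)
    (φ'' := 0) (by fun_prop) (.of_forall fun s => by simpa using (hasDerivAt_id s).const_mul β)
    (hasDerivAt_const _ β)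
  simpa using h

end Laplacian

section MaximumPrinciple

variable {E : Type*} [NormedAddCommGroup E] [InnerProductSpace ℝ E] [FiniteDimensional ℝ E]
  {D : Set E} {v : E → ℝ} {M : ℝ}

theorem le_of_forall_mem_frontier_le_of_laplacian_pos (hD : IsOpen D) (hb : IsBounded D)
    (hvc : ContinuousOn v (closure D)) (hv : ContDiffOn ℝ 2 v D) (hΔ : ∀ x ∈ D, 0 < Δ v x)
    (hM : ∀ z ∈ frontier D, v z ≤ M) : ∀ x ∈ D, v x ≤ M := by
  intro x hx
  obtain ⟨z, hz, hmax⟩ := hb.isCompact_closure.exists_isMaxOn ⟨x, subset_closure hx⟩ hvc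
  have hzD : z ∉ D := fun hzD =>
    ((hmax.on_subset subset_closure).isLocalMax (hD.mem_nhds hzD)).laplacian_nonpos
      (hv.contDiffAt (hD.mem_nhds hzD)) |>.not_gt (hΔ z hzD)
  exact (hmax (subset_closure hx)).trans (hM z ⟨hz, by rwa [hD.interior_eq]⟩)

variable [Nontrivial E]

theorem le_of_forall_mem_frontier_le_of_laplacian_nonneg (hD : IsOpen D)
    (hb : IsBounded D) (hvc : ContinuousOn v (closure D)) (hv : ContDiffOn ℝ 2 v D)
    (hΔ : ∀ x ∈ D, 0 ≤ Δ v x) (hM : ∀ z ∈ frontier D, v z ≤ M) : ∀ x ∈ D, v x ≤ M := by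
  obtain ⟨R, hR⟩ := hb.subset_closedBall 0
  have hnorm : ∀ y ∈ closure D, ‖y‖ ^ 2 ≤ R ^ 2 := fun y hy => by
    have := closure_minimal hR isClosed_closedBall hy
    rw [mem_closedBall_zero_iff] at this
    exact pow_le_pow_left₀ (norm_nonneg y) this 2
  -- perturb `v` by `β ‖y‖²`, which has Laplacian `2 n β > 0`, and let `β → 0`
  have hβ : ∀ β > 0, ∀ x ∈ D, v x ≤ M + β * R ^ 2 := by
    intro β hβ x hx
    have hsq : ContDiff ℝ 2 fun y : E => β * ‖y‖ ^ 2 := contDiff_const.mul (contDiff_norm_sq ℝ)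
    have := le_of_forall_mem_frontier_le_of_laplacian_pos (v := v + fun y => β * ‖y‖ ^ 2)
      (M := M + β * R ^ 2) hD hb
      (hvc.add hsq.continuous.continuousOn) (hv.add hsq.contDiffOn) (fun y hy => ?_)
      (fun z hz => ?_) x hx
    · simp only [Pi.add_apply] at this
      nlinarith [norm_nonneg x]
    · rw [(hv.contDiffAt (hD.mem_nhds hy)).laplacian_add hsq.contDiffAt,
        laplacian_const_mul_norm_sq]
      have : (0 : ℝ) < finrank ℝ E := by exact_mod_cast finrank_pos
      nlinarith [hΔ y hy]
    · simp only [Pi.add_apply]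
      nlinarith [hM z hz, hnorm z (frontier_subset_closure hz)]
  intro x hx
  have hlim : Tendsto (fun β => M + β * R ^ 2) (𝓝[>] 0) (𝓝 M) :=
    ((continuous_const.add (continuous_id.mul continuous_const)).tendsto' 0 M (by simp)).mono_left
      nhdsWithin_le_nhds
  exact ge_of_tendsto hlim (eventually_nhdsWithin_of_forall fun β hβ' => hβ β hβ' x hx)

theorem IsCompact.le_of_laplacian_nonneg_of_tendsto_cocompact {K : Set E} (hK : IsCompact K)
    {f : E → ℝ} {L M : ℝ} (hcont : ContinuousOn f (closure Kᶜ)) (hf : ContDiffOn ℝ 2 f Kᶜ)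
    (hΔ : ∀ x ∈ Kᶜ, 0 ≤ Δ f x) (hfr : ∀ z ∈ frontier Kᶜ, f z ≤ M)
    (hlim : Tendsto f (cocompact E) (𝓝 L)) (hLM : L ≤ M) : ∀ x ∈ Kᶜ, f x ≤ M := by
  intro x hx
  refine le_of_forall_gt_imp_ge_of_dense fun a ha => ?_
  obtain ⟨C, hC, hCf⟩ := mem_cocompact.1 (hlim.eventually (gt_mem_nhds (hLM.trans_lt ha)))
  obtain ⟨R, hR⟩ := ((hK.union hC).isBounded.insert x).subset_ball 0
  have hKC : K ∪ C ⊆ ball 0 R := (subset_insert x _).trans hR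
  have hD : IsOpen (Kᶜ ∩ ball 0 R) := hK.isClosed.isOpen_compl.inter isOpen_ball
  refine le_of_forall_mem_frontier_le_of_laplacian_nonneg hD
    (isBounded_ball.subset inter_subset_right)
    (hcont.mono (closure_mono inter_subset_left)) (hf.mono inter_subset_left)
    (fun y hy => hΔ y hy.1) (fun z hz => ?_) x ⟨hx, hR (mem_insert x _)⟩
  have hzD : z ∉ Kᶜ ∩ ball 0 R := by simpa [hD.interior_eq] using hz.2
  by_cases hzK : z ∈ K
  · have hzfr : z ∈ frontier Kᶜ :=
      ⟨closure_mono inter_subset_left hz.1, by simpa [hK.isClosed.isOpen_compl.interior_eq]⟩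
    exact (hfr z hzfr).trans ha.le
  · have hzC : z ∉ C := fun hzC => hzD ⟨hzK, hKC (Or.inr hzC)⟩
    exact (hCf hzC).le

end MaximumPrinciple

section Hopf

variable {E : Type*} [NormedAddCommGroup E]

noncomputable def hopfBarrier (α ρ : ℝ) (c y : E) : ℝ :=
  Real.exp (-α * ‖y - c‖ ^ 2) - Real.exp (-α * ρ ^ 2)

theorem hopfBarrier_le_one {α : ℝ} (hα : 0 ≤ α) (ρ : ℝ) (c y : E) : hopfBarrier α ρ c y ≤ 1 := by
  have h₁ : Real.exp (-α * ‖y - c‖ ^ 2) ≤ 1 :=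
    Real.exp_le_one_iff.2 (by nlinarith [sq_nonneg ‖y - c‖])
  have h₂ := Real.exp_pos (-α * ρ ^ 2)
  rw [hopfBarrier]
  linarith

theorem mul_le_hopfBarrier_add_smul [NormedSpace ℝ E] {α ρ : ℝ} (hα : 0 ≤ α) {c z : E}
    (hz : ‖z - c‖ = ρ) {t : ℝ} (ht₀ : 0 ≤ t) (ht₁ : t ≤ 1) :
    α * ρ ^ 2 * Real.exp (-α * ρ ^ 2) * t ≤ hopfBarrier α ρ c (z + t • (c - z)) := by
  have hnorm : ‖z + t • (c - z) - c‖ = (1 - t) * ρ := by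
    rw [show z + t • (c - z) - c = (1 - t) • (z - c) by module, norm_smul, hz,
      Real.norm_of_nonneg (by linarith)]
  -- convexity of `exp` at `-α ρ²`
  have hexp := Real.add_one_le_exp (-α * ((1 - t) * ρ) ^ 2 - -α * ρ ^ 2)
  have hE := Real.exp_pos (-α * ρ ^ 2)
  rw [Real.exp_sub, le_div_iff₀ hE] at hexp
  rw [hopfBarrier, hnorm]
  nlinarith [mul_nonneg (mul_nonneg hα (sq_nonneg ρ))
    (mul_nonneg hE.le (mul_nonneg ht₀ (sub_nonneg.2 ht₁)))]

variable [InnerProductSpace ℝ E]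

theorem contDiff_hopfBarrier (α ρ : ℝ) (c : E) : ContDiff ℝ 2 (hopfBarrier α ρ c) :=
  (((contDiff_id.sub contDiff_const).norm_sq ℝ).const_smul (-α)).exp.sub contDiff_const

variable [FiniteDimensional ℝ E]

theorem laplacian_hopfBarrier (α ρ : ℝ) (c x : E) :
    Δ (hopfBarrier α ρ c) x =
      2 * α * Real.exp (-α * ‖x - c‖ ^ 2) * (2 * α * ‖x - c‖ ^ 2 - finrank ℝ E) := by
  have hφ' (s : ℝ) : HasDerivAt (fun s => Real.exp (-α * s) - Real.exp (-α * ρ ^ 2))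
      (-α * Real.exp (-α * s)) s := by
    simpa [mul_comm] using
      (((hasDerivAt_id s).const_mul (-α)).exp).sub_const (Real.exp (-α * ρ ^ 2))
  have hφ'' : HasDerivAt (fun s => -α * Real.exp (-α * s)) (α ^ 2 * Real.exp (-α * ‖x - c‖ ^ 2))
      (‖x - c‖ ^ 2) := by
    refine ((((hasDerivAt_id _).const_mul (-α)).exp).const_mul (-α)).congr_deriv ?_
    simp only [id, mul_one]
    ring
  unfold hopfBarrier
  rw [laplacian_comp_norm_sub_sq (by fun_prop) (.of_forall hφ') hφ'']
  ring

variable {u : E → ℝ} {c z : E} {ρ : ℝ}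

theorem mul_hopfBarrier_le {α δ : ℝ} (hα : 2 * finrank ℝ E < α * ρ ^ 2)
    (hu : ContDiffOn ℝ 2 u (ball c ρ)) (hcont : ContinuousOn u (closedBall c ρ))
    (hΔ : ∀ y ∈ ball c ρ, Δ u y ≤ 0) (hnn : ∀ y ∈ sphere c ρ, 0 ≤ u y)
    (hδ : ∀ y ∈ sphere c (ρ / 2), δ ≤ u y) (hδ₀ : 0 < δ) :
    ∀ y ∈ ball c ρ \ closedBall c (ρ / 2), δ * hopfBarrier α ρ c y ≤ u y := by
  have hα₀ : 0 < α := pos_of_mul_pos_left ((by positivity : (0 : ℝ) ≤ 2 * finrank ℝ E).trans_lt hα)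
    (sq_nonneg ρ)
  have hA : IsOpen (ball c ρ \ closedBall c (ρ / 2)) := isOpen_ball.sdiff isClosed_closedBall
  have hclosure : closure (ball c ρ \ closedBall c (ρ / 2)) ⊆ closedBall c ρ \ ball c (ρ / 2) :=
    closure_minimal (sdiff_subset_sdiff ball_subset_closedBall ball_subset_closedBall)
      (isClosed_closedBall.sdiff isOpen_ball)
  have hB := contDiff_hopfBarrier α ρ c
  intro y hy
  have := le_of_forall_mem_frontier_le_of_laplacian_pos (v := δ • hopfBarrier α ρ c - u) (M := 0) hA
    (isBounded_ball.subset sdiff_subset)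
    ((continuous_const.smul hB.continuous).continuousOn.sub
      (hcont.mono (hclosure.trans sdiff_subset)))
    ((contDiffOn_const.smul hB.contDiffOn).sub (hu.mono sdiff_subset)) (fun x hx => ?_)
    (fun z hz => ?_) y hy
  · simp only [Pi.sub_apply, Pi.smul_apply, smul_eq_mul] at this
    linarith
  · have hux := hu.contDiffAt (isOpen_ball.mem_nhds hx.1)
    have hδB : ContDiffAt ℝ 2 (δ • hopfBarrier α ρ c) x := (hB.const_smul δ).contDiffAt
    rw [hδB.laplacian_sub hux, laplacian_smul _ hB.contDiffAt, laplacian_hopfBarrier]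
    have hq : ρ ^ 2 / 4 < ‖x - c‖ ^ 2 := by
      have h₁ := hx.1
      have h₂ := hx.2
      rw [mem_ball, dist_eq_norm] at h₁
      rw [mem_closedBall, dist_eq_norm, not_le] at h₂
      nlinarith [norm_nonneg (x - c)]
    have hn : 0 < 2 * α * ‖x - c‖ ^ 2 - finrank ℝ E := by nlinarith
    have hΔB := mul_pos hδ₀ (mul_pos (by positivity : 0 < 2 * α * Real.exp (-α * ‖x - c‖ ^ 2)) hn)
    rw [smul_eq_mul]
    linarith [hΔ x hx.1]
  · have hzA : z ∉ ball c ρ \ closedBall c (ρ / 2) := by simpa [hA.interior_eq] using hz.2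
    obtain ⟨hzρ, hzρ2⟩ := hclosure hz.1
    simp only [Pi.sub_apply, Pi.smul_apply, smul_eq_mul, sub_nonpos]
    by_cases hz' : z ∈ ball c ρ
    · have hzs : z ∈ sphere c (ρ / 2) :=
        le_antisymm (not_lt.1 fun h => hzA ⟨hz', not_le.2 h⟩) (not_lt.1 hzρ2)
      nlinarith [hopfBarrier_le_one hα₀.le ρ c z, hδ z hzs]
    · have hzs : z ∈ sphere c ρ := le_antisymm hzρ (not_lt.1 hz')
      have : hopfBarrier α ρ c z = 0 := by
        rw [hopfBarrier, ← dist_eq_norm, mem_sphere.1 hzs, sub_self]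
      rw [this, mul_zero]
      exact hnn z hzs

theorem hopf_lemma (hρ : 0 < ρ) (hz : z ∈ sphere c ρ) (hu : ContDiffOn ℝ 2 u (ball c ρ))
    (hcont : ContinuousOn u (closedBall c ρ)) (hΔ : ∀ y ∈ ball c ρ, Δ u y ≤ 0)
    (hpos : ∀ y ∈ ball c ρ, 0 < u y) (hz₀ : u z = 0) (hdiff : DifferentiableAt ℝ u z) :
    0 < fderiv ℝ u z (c - z) := by
  obtain ⟨α, hα⟩ : ∃ α, 2 * finrank ℝ E < α * ρ ^ 2 :=
    ⟨(2 * finrank ℝ E + 1) / ρ ^ 2, by rw [div_mul_cancel₀ _ (by positivity)]; linarith⟩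
  have hα₀ : 0 < α :=
    pos_of_mul_pos_left ((by positivity : (0 : ℝ) ≤ 2 * finrank ℝ E).trans_lt hα) (sq_nonneg ρ)
  have hnn : ∀ y ∈ sphere c ρ, 0 ≤ u y := by
    have hclosed : IsClosed (closedBall c ρ ∩ u ⁻¹' Ici 0) :=
      hcont.preimage_isClosed_of_isClosed isClosed_closedBall isClosed_Ici
    have := closure_minimal (s := ball c ρ)
      (fun y hy => (⟨ball_subset_closedBall hy, (hpos y hy).le⟩ : y ∈ closedBall c ρ ∩ u ⁻¹' Ici 0))
      hclosed
    rw [closure_ball c hρ.ne'] at this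
    exact fun y hy => (this (sphere_subset_closedBall hy)).2
  obtain ⟨δ, hδ₀, hδ⟩ := (isCompact_sphere c (ρ / 2)).exists_forall_le'
    (hcont.mono (sphere_subset_closedBall.trans (closedBall_subset_closedBall (by linarith))))
    (fun y hy => hpos y (by rw [mem_ball, mem_sphere.1 hy]; linarith))
  have hcomp := mul_hopfBarrier_le hα hu hcont hΔ hnn hδ hδ₀
  have hgrowth : ∀ t ∈ Ioo (0 : ℝ) (1 / 2),
      δ * (α * ρ ^ 2 * Real.exp (-α * ρ ^ 2)) ≤ slope (fun t => u (z + t • (c - z))) 0 t := by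
    rintro t ⟨ht₀, ht₁⟩
    have hnorm : dist (z + t • (c - z)) c = (1 - t) * ρ := by
      rw [dist_eq_norm, show z + t • (c - z) - c = (1 - t) • (z - c) by module, norm_smul,
        mem_sphere_iff_norm.1 hz, Real.norm_of_nonneg (by linarith)]
    have hmem : z + t • (c - z) ∈ ball c ρ \ closedBall c (ρ / 2) := by
      rw [Set.mem_sdiff, mem_ball, mem_closedBall, hnorm, not_le]
      constructor <;> nlinarith
    have := (mul_le_mul_of_nonneg_left (mul_le_hopfBarrier_add_smul hα₀.le
      (mem_sphere_iff_norm.1 hz) ht₀.le (by linarith)) hδ₀.le).trans (hcomp _ hmem)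
    rw [slope_def_field, zero_smul, add_zero, hz₀, sub_zero, sub_zero, le_div_iff₀ ht₀]
    linarith
  have hdiff' : DifferentiableAt ℝ u (z + (0 : ℝ) • (c - z)) := by simpa using hdiff
  have hline : HasDerivAt (fun t : ℝ => u (z + t • (c - z))) (fderiv ℝ u z (c - z)) 0 := by
    simpa using hdiff'.hasDerivAt_comp_add_smul
  have hslope := (hasDerivAt_iff_tendsto_slope.1 hline).mono_left (nhdsGT_le_nhdsNE (0 : ℝ))
  exact (by positivity : 0 < δ * (α * ρ ^ 2 * Real.exp (-α * ρ ^ 2)))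
    |>.trans_le (ge_of_tendsto hslope (eventually_of_mem (Ioo_mem_nhdsGT (by norm_num)) hgrowth))

end Hopf

section StrongMinimumPrinciple

variable {E : Type*} [NormedAddCommGroup E] [InnerProductSpace ℝ E] [FiniteDimensional ℝ E]
  {Ω : Set E} {u : E → ℝ}

theorem isOpen_setOf_eq_zero_of_laplacian_nonpos (hΩ : IsOpen Ω) (hu : ContDiffOn ℝ 2 u Ω)
    (hΔ : ∀ x ∈ Ω, Δ u x ≤ 0) (hnn : ∀ x ∈ Ω, 0 ≤ u x) : IsOpen {x ∈ Ω | u x = 0} := by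
  refine Metric.isOpen_iff.2 fun x₀ ⟨hx₀, hux₀⟩ => ?_
  obtain ⟨R, hR, hball⟩ := Metric.isOpen_iff.1 hΩ x₀ hx₀
  have hsub : closedBall x₀ (R / 2) ⊆ Ω := (closedBall_subset_ball (by linarith)).trans hball
  refine ⟨R / 4, by positivity, fun y hy => ?_⟩
  have hyΩ : y ∈ Ω :=
    hsub (ball_subset_closedBall.trans (closedBall_subset_closedBall (by linarith)) hy)
  refine ⟨hyΩ, not_not.1 fun huy => ?_⟩
  -- the ball around `y` through a nearest zero `z` of `u` contains no zero, so Hopf's lemma applies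
  set Z := closedBall x₀ (R / 2) ∩ u ⁻¹' {0}
  have hx₀Z : x₀ ∈ Z := ⟨mem_closedBall_self (by positivity), hux₀⟩
  have hZ : IsClosed Z :=
    (hu.continuousOn.mono hsub).preimage_isClosed_of_isClosed isClosed_closedBall isClosed_singleton
  obtain ⟨z, hzZ, hzy⟩ := hZ.exists_infDist_eq_dist ⟨x₀, hx₀Z⟩ y
  set r := infDist y Z
  have hr₀ : 0 < r := (hZ.notMem_iff_infDist_pos ⟨x₀, hx₀Z⟩).1 fun h => huy h.2
  have hsub' : closedBall y r ⊆ closedBall x₀ (R / 2) := fun p hp => by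
    have : r < R / 4 := (infDist_le_dist_of_mem hx₀Z).trans_lt hy
    rw [mem_closedBall] at hp ⊢
    linarith [dist_triangle p y x₀, mem_ball.1 hy]
  have hpos : ∀ p ∈ ball y r, 0 < u p := fun p hp => by
    have hp' := hsub' (ball_subset_closedBall hp)
    refine (hnn p (hsub hp')).lt_of_ne' fun hp0 => ?_
    have := infDist_le_dist_of_mem (x := y) (show p ∈ Z from ⟨hp', hp0⟩)
    exact (mem_ball'.1 hp).not_ge this
  have hzΩ : z ∈ Ω := hsub hzZ.1
  have hmin : IsLocalMin u z := Filter.mem_of_superset (hΩ.mem_nhds hzΩ) fun p hp => by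
    simpa [show u z = 0 from hzZ.2] using hnn p hp
  have hrΩ : closedBall y r ⊆ Ω := hsub'.trans hsub
  have := hopf_lemma hr₀ (by rw [mem_sphere, dist_comm, ← hzy])
    (hu.mono (ball_subset_closedBall.trans hrΩ)) (hu.continuousOn.mono hrΩ)
    (fun p hp => hΔ p (hrΩ (ball_subset_closedBall hp))) hpos hzZ.2
    ((hu.differentiableOn (by norm_num)).differentiableAt (hΩ.mem_nhds hzΩ))
  rw [hmin.fderiv_eq_zero] at this
  exact this.ne rfl

theorem IsPreconnected.pos_of_laplacian_nonpos (hconn : IsPreconnected Ω) (hΩ : IsOpen Ω)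
    (hu : ContDiffOn ℝ 2 u Ω) (hΔ : ∀ x ∈ Ω, Δ u x ≤ 0) (hnn : ∀ x ∈ Ω, 0 ≤ u x) {y : E}
    (hy : y ∈ Ω) (huy : 0 < u y) : ∀ x ∈ Ω, 0 < u x := by
  have hP : IsOpen {x ∈ Ω | 0 < u x} :=
    hu.continuousOn.isOpen_inter_preimage hΩ isOpen_Ioi
  rcases hconn.subset_or_subset (isOpen_setOf_eq_zero_of_laplacian_nonpos hΩ hu hΔ hnn) hP
    (disjoint_left.2 fun x hx₀ hx₁ => hx₁.2.ne' hx₀.2)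
    (fun x hx => (hnn x hx).eq_or_lt.imp (fun h => ⟨hx, h.symm⟩) fun h => ⟨hx, h⟩) with h | h
  · exact absurd (h hy).2 huy.ne'
  · exact fun x hx => (h hx).2

end StrongMinimumPrinciple

theorem laplacian_eq_innerProductSpace_laplacian (u : E3 → ℝ) (x : E3) :
    laplacian u x = Δ u x := by
  rw [laplacian_eq_iteratedFDeriv_orthonormalBasis u (EuclideanSpace.basisFun (Fin 3) ℝ)]
  simp [laplacian]

/-- Strict bounds for the Green function at infinity: if `K ⊆ ℝ³` is compact with nonempty
frontier, `Ω = ℝ³ ∖ K` is connected, and `G` is continuous on the closure of `Ω`, harmonic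
on `Ω`, vanishes on the frontier of `Ω`, and tends to `1` at infinity, then `0 < G < 1`
on `Ω`. -/
theorem green_function_strict_bounds
    (K : Set E3) (hK : IsCompact K) (hfr : (frontier K).Nonempty)
    (hconn : IsConnected (Kᶜ : Set E3)) (G : E3 → ℝ)
    (hcont : ContinuousOn G (closure Kᶜ))
    (hharm : HarmonicOn G Kᶜ)
    (hbdry : ∀ p ∈ frontier Kᶜ, G p = 0)
    (hlim : Tendsto G (Filter.cocompact E3) (nhds 1)) :
    ∀ x ∈ Kᶜ, 0 < G x ∧ G x < 1 := by
  have hΩ : IsOpen Kᶜ := hK.isClosed.isOpen_compl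
  obtain ⟨hG, hΔ⟩ := hharm
  simp only [laplacian_eq_innerProductSpace_laplacian] at hΔ
  have hle : ∀ x ∈ Kᶜ, G x ≤ 1 := hK.le_of_laplacian_nonneg_of_tendsto_cocompact hcont hG
    (fun x hx => (hΔ x hx).ge) (fun z hz => (hbdry z hz).trans_le zero_le_one) hlim le_rfl
  have hge : ∀ x ∈ Kᶜ, 0 ≤ G x := by
    have := hK.le_of_laplacian_nonneg_of_tendsto_cocompact hcont.neg hG.neg
      (fun x hx => by simp [laplacian_neg, hΔ x hx]) (fun z hz => by simp [hbdry z hz]) hlim.neg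
      neg_one_lt_zero.le
    exact fun x hx => neg_nonpos.1 (this x hx)
  obtain ⟨y₁, hy₁G, hy₁⟩ :=
    ((hlim.eventually (lt_mem_nhds zero_lt_one)).and hK.compl_mem_cocompact).exists
  obtain ⟨p, hp⟩ := hfr
  rw [← frontier_compl] at hp
  have hp' : p ∈ closure Kᶜ := frontier_subset_closure hp
  have : (𝓝[Kᶜ] p).NeBot := mem_closure_iff_nhdsWithin_neBot.1 hp'
  have hnear : Tendsto G (𝓝[Kᶜ] p) (𝓝 0) :=
    hbdry p hp ▸ (hcont p hp').mono_left (nhdsWithin_mono _ subset_closure)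
  obtain ⟨y₀, hy₀G, hy₀⟩ :=
    ((hnear.eventually (gt_mem_nhds zero_lt_one)).and self_mem_nhdsWithin).exists
  refine fun x hx => ⟨hconn.isPreconnected.pos_of_laplacian_nonpos hΩ hG (fun x hx => (hΔ x hx).le)
    hge hy₁ hy₁G x hx, sub_pos.1 ?_⟩
  refine hconn.isPreconnected.pos_of_laplacian_nonpos (u := (fun _ => 1) - G) hΩ
    (contDiffOn_const.sub hG) (fun y hy => ?_) (fun y hy => sub_nonneg.2 (hle y hy)) hy₀
    (sub_pos.2 hy₀G) x hx
  rw [contDiffAt_const.laplacian_sub (hG.contDiffAt (hΩ.mem_nhds hy)), laplacian_const, hΔ y hy]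
  simp
end

section
/- Let K ⊆ ℝ³ be compact and Ω = ℝ³ ∖ K. Suppose u and G are both continuous on the closure of Ω and harmonic on Ω, both satisfy u(x) → 1 and G(x) → 1 as ‖x‖ → ∞, u ≥ 0 at every point of the frontier of Ω, and G = 0 at every point of the frontier of Ω. Suppose moreover that the limits m = lim_{‖x‖→∞} ‖x‖(1 − u(x)) and A = lim_{‖x‖→∞} ‖x‖(1 − G(x)) exist. Then m ≤ A. -/
open Filter

/-!
Since `u - G` is harmonic on `Ω`, tends to `0` at infinity and is `≥ 0` on `∂Ω`, the weak minimum
principle gives `G ≤ u` on `Ω`, hence `‖x‖ (1 - u x) ≤ ‖x‖ (1 - G x)` near infinity and `m ≤ A`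
in the limit. The minimum principle is proved on the bounded sets `Ω ∩ B(0, R)`: an interior
minimum of a `C²` function has nonnegative Laplacian, which the strictly superharmonic
perturbation `u - G - ε ‖x‖²` cannot have, so its minimum lies on `∂Ω` or on the sphere of
radius `R`, where `u - G` is almost nonnegative once `R` is large.
-/

open Topology Metric Set InnerProductSpace
open scoped Laplacian

theorem IsLocalMin.deriv_deriv_nonneg {g : ℝ → ℝ} {a : ℝ} (h : IsLocalMin g a)
    (hc : ContinuousAt g a) : 0 ≤ deriv (deriv g) a := by
  by_contra! hneg
  have hconst : g =ᶠ[𝓝 a] fun _ => g a :=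
    (h.and (isLocalMax_of_deriv_deriv_neg hneg h.deriv_eq_zero hc)).mono
      fun t ht => le_antisymm ht.2 ht.1
  have hzero : deriv (deriv g) a = 0 := by
    rw [hconst.deriv.deriv_eq]
    simp
  exact hneg.ne hzero

section LocalMin

variable {E : Type*} [NormedAddCommGroup E] [NormedSpace ℝ E]

theorem IsLocalMin.iteratedFDeriv_two_nonneg {f : E → ℝ} {x : E} (h : IsLocalMin f x)
    (hf : ContDiffAt ℝ 2 f x) (v : E) : 0 ≤ iteratedFDeriv ℝ 2 f x ![v, v] := by
  set γ : ℝ → E := fun t => x + t • v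
  have hγ : ∀ t, HasDerivAt γ v t := fun t => by
    simpa [γ] using ((hasDerivAt_id t).smul_const v).const_add x
  have hγ0 : γ 0 = x := by simp [γ]
  have hγc : ContinuousAt γ 0 := (hγ 0).continuousAt
  have hderiv : deriv (f ∘ γ) =ᶠ[𝓝 0] fun t => fderiv ℝ f (γ t) v := by
    filter_upwards [hγc.eventually (hγ0 ▸ hf.eventually (by simp))] with t ht
    exact ((ht.differentiableAt (by norm_num)).hasFDerivAt.comp_hasDerivAt t (hγ t)).deriv
  have hfderiv : DifferentiableAt ℝ (fderiv ℝ f) x :=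
    (hf.fderiv_right (m := 1) (by norm_num)).differentiableAt one_ne_zero
  have hderiv2 : HasDerivAt (fun t => fderiv ℝ f (γ t) v) (fderiv ℝ (fderiv ℝ f) x v v) 0 := by
    simpa using ((hfderiv.hasFDerivAt.comp_hasDerivAt_of_eq 0 (hγ 0) hγ0.symm).clm_apply
      (hasDerivAt_const 0 v))
  have hmin : IsLocalMin (f ∘ γ) 0 := (hγ0 ▸ h).comp_continuous hγc
  rw [iteratedFDeriv_two_apply]
  simpa [hderiv.deriv_eq.trans hderiv2.deriv] using
    hmin.deriv_deriv_nonneg (hf.continuousAt.comp_of_eq hγc hγ0)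

end LocalMin

section MinimumPrinciple

variable {E : Type*} [NormedAddCommGroup E] [InnerProductSpace ℝ E] [FiniteDimensional ℝ E]

theorem IsLocalMin.laplacian_nonneg {f : E → ℝ} {x : E} (h : IsLocalMin f x)
    (hf : ContDiffAt ℝ 2 f x) : 0 ≤ Δ f x := by
  rw [laplacian_eq_iteratedFDeriv_stdOrthonormalBasis]
  exact Finset.sum_nonneg fun i _ => h.iteratedFDeriv_two_nonneg hf _

theorem laplacian_norm_sq (x : E) : Δ (fun y : E => ‖y‖ ^ 2) x = 2 * Module.finrank ℝ E := by
  have hD2 : ∀ v : E, iteratedFDeriv ℝ 2 (fun y : E => ‖y‖ ^ 2) x ![v, v] = 2 * ‖v‖ ^ 2 := by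
    intro v
    rw [iteratedFDeriv_two_apply, fderiv_norm_sq, fderiv_const_smul (innerSL ℝ).differentiableAt,
      ContinuousLinearMap.fderiv]
    simp only [Matrix.cons_val_zero, Matrix.cons_val_one, two_smul, two_mul]
    -- `innerSL_apply_apply` does not fire on this coercion of `innerSL ℝ`, but holds by `rfl`
    exact congrArg₂ (· + ·) (real_inner_self_eq_norm_sq v) (real_inner_self_eq_norm_sq v)
  simp [laplacian_eq_iteratedFDeriv_stdOrthonormalBasis, hD2, mul_comm]

theorem exists_mem_frontier_le_of_laplacian_neg {U : Set E} (hU : Bornology.IsBounded U)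
    {f : E → ℝ} (hcont : ContinuousOn f (closure U))
    (hf : ∀ z ∈ U, ContDiffAt ℝ 2 f z ∧ Δ f z < 0) {x : E} (hx : x ∈ U) :
    ∃ z ∈ frontier U, f z ≤ f x := by
  obtain ⟨z, hz, hmin⟩ := hU.isCompact_closure.exists_isMinOn ⟨x, subset_closure hx⟩ hcont
  refine ⟨z, ⟨hz, fun hzU => ?_⟩, hmin (subset_closure hx)⟩
  have hloc : IsLocalMin f z :=
    hmin.isLocalMin (mem_of_superset (mem_interior_iff_mem_nhds.1 hzU) subset_closure)
  obtain ⟨hC2, hneg⟩ := hf z (interior_subset hzU)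
  exact (hloc.laplacian_nonneg hC2).not_gt hneg

theorem InnerProductSpace.HarmonicOnNhd.le_of_forall_frontier_le [Nontrivial E] {U : Set E}
    (hU : Bornology.IsBounded U) {f : E → ℝ} (hcont : ContinuousOn f (closure U))
    (hf : HarmonicOnNhd f U) {c : ℝ} (hc : ∀ z ∈ frontier U, c ≤ f z) {x : E} (hx : x ∈ U) :
    c ≤ f x := by
  obtain ⟨R, hR⟩ := hU.subset_closedBall 0
  have hpert : ∀ ε > 0, c - ε * R ^ 2 ≤ f x := by
    intro ε hε
    have hq : ContDiff ℝ 2 (fun y : E => ‖y‖ ^ 2) := contDiff_norm_sq ℝ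
    have hg : ∀ z ∈ U, ContDiffAt ℝ 2 (f - ε • fun y : E => ‖y‖ ^ 2) z ∧
        Δ (f - ε • fun y : E => ‖y‖ ^ 2 : E → ℝ) z < 0 := by
      intro z hz
      have hqz : ContDiffAt ℝ 2 (ε • fun y : E => ‖y‖ ^ 2) z := hq.contDiffAt.const_smul ε
      refine ⟨(hf z hz).1.sub hqz, ?_⟩
      rw [(hf z hz).1.laplacian_sub hqz, laplacian_smul ε hq.contDiffAt, laplacian_norm_sq,
        (hf z hz).2.self_of_nhds]
      have : (0 : ℝ) < Module.finrank ℝ E := by exact_mod_cast Module.finrank_pos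
      simp only [Pi.zero_apply, smul_eq_mul, zero_sub, neg_neg_iff_pos]
      positivity
    obtain ⟨z, hz, hzx⟩ := exists_mem_frontier_le_of_laplacian_neg hU
      (hcont.sub (hq.continuous.const_smul ε).continuousOn) hg hx
    have hzR : ‖z‖ ≤ R := by
      simpa using closure_minimal hR isClosed_closedBall (frontier_subset_closure hz)
    simp only [Pi.sub_apply, Pi.smul_apply, smul_eq_mul] at hzx
    nlinarith [hc z hz, mul_le_mul_of_nonneg_left (pow_le_pow_left₀ (norm_nonneg z) hzR 2) hε.le,
      mul_nonneg hε.le (sq_nonneg ‖x‖)]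
  have hlim : Tendsto (fun ε => c - ε * R ^ 2) (𝓝[>] 0) (𝓝 c) :=
    ((continuous_const.sub (continuous_id.mul continuous_const)).tendsto' 0 c (by simp)).mono_left
      nhdsWithin_le_nhds
  exact le_of_tendsto hlim (eventually_nhdsWithin_of_forall hpert)

theorem InnerProductSpace.HarmonicOnNhd.nonneg_of_tendsto_cocompact [Nontrivial E] {Ω : Set E}
    {f : E → ℝ} (hcont : ContinuousOn f (closure Ω)) (hf : HarmonicOnNhd f Ω)
    (hlim : Tendsto f (cocompact E) (𝓝 0)) (hbdry : ∀ z ∈ frontier Ω, 0 ≤ f z)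
    {x : E} (hx : x ∈ Ω) : 0 ≤ f x := by
  refine le_of_forall_neg_add_le fun δ hδ => ?_
  obtain ⟨S, hS, hSf⟩ := mem_cocompact.1 (hlim.eventually (eventually_gt_nhds hδ))
  obtain ⟨R, hR⟩ := (hS.isBounded.insert x).subset_ball 0
  have hfR : HarmonicOnNhd f (Ω ∩ ball 0 R) := hf.mono inter_subset_left
  rw [zero_add]
  refine hfR.le_of_forall_frontier_le (isBounded_ball.subset inter_subset_right)
    (hcont.mono (closure_mono inter_subset_left)) (fun z hz => ?_) ⟨hx, hR (mem_insert x S)⟩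
  rcases frontier_inter_subset _ _ hz with ⟨hzΩ, -⟩ | ⟨-, hzR⟩
  · exact hδ.le.trans (hbdry z hzΩ)
  · rw [isOpen_ball.frontier_eq] at hzR
    exact (hSf fun hzS => hzR.2 (hR (mem_insert_of_mem x hzS))).le

end MinimumPrinciple

theorem laplacian_eq_laplacian_euclidean (u : E3 → ℝ) : laplacian u = Δ u := by
  rw [laplacian_eq_iteratedFDeriv_orthonormalBasis u (EuclideanSpace.basisFun (Fin 3) ℝ)]
  ext x
  simp [laplacian, EuclideanSpace.basisFun_apply]

theorem HarmonicOn.harmonicOnNhd {u : E3 → ℝ} {Ω : Set E3} (hu : HarmonicOn u Ω)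
    (hΩ : IsOpen Ω) : HarmonicOnNhd u Ω := fun x hx =>
  ⟨hu.1.contDiffAt (hΩ.mem_nhds hx), by
    filter_upwards [hΩ.mem_nhds hx] with y hy
    rw [← laplacian_eq_laplacian_euclidean]
    exact hu.2 y hy⟩

/-- Comparison of expansion coefficients: with `u` and `G` as in the comparison `u ≥ G` on
the exterior domain `Ω = ℝ³ ∖ K` (both harmonic, tending to `1` at infinity, `u ≥ 0` and
`G = 0` on the frontier), if the limits `m = lim ‖x‖(1 − u(x))` and `A = lim ‖x‖(1 − G(x))`
exist, then `m ≤ A`. -/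
theorem mass_le_green_coefficient
    (K : Set E3) (hK : IsCompact K) (u G : E3 → ℝ)
    (hucont : ContinuousOn u (closure Kᶜ)) (hGcont : ContinuousOn G (closure Kᶜ))
    (huharm : HarmonicOn u Kᶜ) (hGharm : HarmonicOn G Kᶜ)
    (hulim : Tendsto u (Filter.cocompact E3) (nhds 1))
    (hGlim : Tendsto G (Filter.cocompact E3) (nhds 1))
    (hubdry : ∀ p ∈ frontier Kᶜ, 0 ≤ u p)
    (hGbdry : ∀ p ∈ frontier Kᶜ, G p = 0)
    (m A : ℝ)
    (hm : Tendsto (fun x : E3 => ‖x‖ * (1 - u x)) (Filter.cocompact E3) (nhds m))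
    (hA : Tendsto (fun x : E3 => ‖x‖ * (1 - G x)) (Filter.cocompact E3) (nhds A)) :
    m ≤ A := by
  have hΩ : IsOpen Kᶜ := hK.isClosed.isOpen_compl
  have hharm : HarmonicOnNhd (u - G) Kᶜ := (huharm.harmonicOnNhd hΩ).sub (hGharm.harmonicOnNhd hΩ)
  have hlim : Tendsto (u - G) (cocompact E3) (𝓝 0) := sub_self (1 : ℝ) ▸ hulim.sub hGlim
  have hGu : ∀ x ∈ Kᶜ, 0 ≤ (u - G) x := fun x hx =>
    hharm.nonneg_of_tendsto_cocompact (hucont.sub hGcont) hlim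
      (fun z hz => by simp [hubdry z hz, hGbdry z hz]) hx
  refine le_of_tendsto_of_tendsto hm hA ?_
  filter_upwards [hK.compl_mem_cocompact] with x hx
  have hGux : G x ≤ u x := sub_nonneg.1 (hGu x hx)
  exact mul_le_mul_of_nonneg_left (by linarith) (norm_nonneg x)
end
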